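/- arXiv:2402.14019 — 5 statements merged into one kernel-verified Lean document; each statement's English description precedes it below -/
import Mathlib

section
/- If π is a probability vector on I ⊔ E that is stationary for a stochastic matrix P (i.e. πᵗP = πᵗ), and P satisfies hypothesis (H1): P(d,i) = π(i) for all d ∈ E and i ∈ I, then the restriction π_I of π to I satisfies π_Iᵗ P_{I×I} = π(I) π_Iᵗ, where π(I) = Σ_{i∈I} π(i); that is, π_I is a left eigenvector of the substochastic matrix P_{I×I} with eigenvalue π(I). -/
open Finset

lemma Fintype.sum_inr_eq_sub_sum_inl {α β M : Type*} [Fintype α] [Fintype β] [AddCommGroup M]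
    (f : α ⊕ β → M) : ∑ b, f (Sum.inr b) = ∑ x, f x - ∑ a, f (Sum.inl a) := by
  rw [Fintype.sum_sum_type, add_sub_cancel_left]

theorem stmt0_general {I E : Type*} [Fintype I] [Fintype E]
    (P : (I ⊕ E) → (I ⊕ E) → ℝ) (π : (I ⊕ E) → ℝ)
    (hπsum : ∑ a, π a = 1)
    (hstat : ∀ b, ∑ a, π a * P a b = π b)
    (hH1 : ∀ (d : E) (i : I), P (Sum.inr d) (Sum.inl i) = π (Sum.inl i)) :
    ∀ j : I, ∑ i : I, π (Sum.inl i) * P (Sum.inl i) (Sum.inl j)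
      = (∑ i : I, π (Sum.inl i)) * π (Sum.inl j) := by
  intro j
  have hsplit := hstat (Sum.inl j)
  rw [Fintype.sum_sum_type] at hsplit
  have hfromE : ∑ d : E, π (Sum.inr d) * P (Sum.inr d) (Sum.inl j)
      = (1 - ∑ i : I, π (Sum.inl i)) * π (Sum.inl j) := by
    simp only [hH1, ← sum_mul, Fintype.sum_inr_eq_sub_sum_inl π, hπsum]
  linear_combination hsplit - hfromE

/-- If π is a stationary probability vector for a stochastic matrix P on I ⊔ E and
(H1) holds (P(d,i) = π(i) for d ∈ E, i ∈ I), then π_Iᵗ P_{I×I} = π(I) π_Iᵗ. -/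
theorem stmt0 {I E : Type*} [Fintype I] [Fintype E] [Nonempty I] [Nonempty E]
    (P : (I ⊕ E) → (I ⊕ E) → ℝ) (π : (I ⊕ E) → ℝ)
    (hPnn : ∀ a b, 0 ≤ P a b) (hProw : ∀ a, ∑ b, P a b = 1)
    (hπpos : ∀ a, 0 < π a) (hπsum : ∑ a, π a = 1)
    (hstat : ∀ b, ∑ a, π a * P a b = π b)
    (hH1 : ∀ (d : E) (i : I), P (Sum.inr d) (Sum.inl i) = π (Sum.inl i)) :
    ∀ j : I, ∑ i : I, π (Sum.inl i) * P (Sum.inl i) (Sum.inl j)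
      = (∑ i : I, π (Sum.inl i)) * π (Sum.inl j) :=
  stmt0_general P π hπsum hstat hH1
end

section
/- Feasibility criterion via Farkas' lemma: let π̂ be a strictly positive probability vector on E = {1,…,ℓ} and L a 0-1 matrix on E. There exists a stochastic matrix P̂ with π̂ᵗP̂ = π̂ᵗ and P̂(t,s) = 0 whenever L(t,s) = 0, if and only if there do NOT exist vectors u, v ∈ ℝ^ℓ satisfying u(t) + v(s)π̂(t) ≥ 0 for all pairs (t,s) with L(t,s) = 1, and Σ_{r=1}^ℓ (u(r) + π̂(r) v(r)) < 0. -/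
/-!
Both sides are the alternatives of Farkas' lemma for the linear map sending `P` to its row sums
and its `π̂`-weighted column sums, restricted to the closed cone of nonnegative `P` supported on
`L`: `P̂` exists iff `(1, π̂)` lies in the image of that cone, and `(u, v)` is a functional
separating `(1, π̂)` from it. Separation needs the image to be closed. It is, because the row sums
of `P` add up to its total mass, so the part of the image where that coordinate sum is bounded is
the image of a compact set.
-/

open Finset

theorem IsClosed.image_of_comp_eq_sum {ι X : Type*} [Fintype ι] [TopologicalSpace X] [T2Space X]
    {C : Set (ι → ℝ)} (hC : IsClosed C) (hC_nonneg : ∀ y ∈ C, 0 ≤ y)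
    {f : (ι → ℝ) → X} (hf : Continuous f) {φ : X → ℝ} (hφ : Continuous φ)
    (hφf : ∀ y ∈ C, φ (f y) = ∑ i, y i) : IsClosed (f '' C) := by
  refine closure_subset_iff_isClosed.mp fun b hb => ?_
  set M := φ b + 1
  have hK : IsCompact (C ∩ {y | ∑ i, y i ≤ M}) := by
    refine (isCompact_Icc (a := 0) (b := fun _ => M)).of_isClosed_subset
      (hC.inter (_root_.isClosed_le (by fun_prop) continuous_const)) fun y ⟨hyC, hyM⟩ => ?_
    exact ⟨hC_nonneg y hyC, fun i =>
      (single_le_sum (fun j _ => hC_nonneg y hyC j) (mem_univ i)).trans hyM⟩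
  have hnear : {x | φ x < M} ∩ f '' C ⊆ f '' (C ∩ {y | ∑ i, y i ≤ M}) := by
    rintro _ ⟨hlt, y, hyC, rfl⟩
    exact ⟨y, ⟨hyC, (hφf y hyC).symm.trans_le (le_of_lt hlt)⟩, rfl⟩
  have hbK : b ∈ closure (f '' (C ∩ {y | ∑ i, y i ≤ M})) :=
    closure_mono hnear ((isOpen_lt hφ continuous_const).inter_closure
      ⟨show φ b < M from lt_add_one _, hb⟩)
  rw [(hK.image hf).isClosed.closure_eq] at hbK
  exact Set.image_mono Set.inter_subset_left hbK

theorem ProperCone.exists_dual_of_notMem_image {ι E : Type*} [Fintype ι] [AddCommGroup E]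
    [TopologicalSpace E] [IsTopologicalAddGroup E] [T2Space E] [Module ℝ E] [ContinuousSMul ℝ E]
    [LocallyConvexSpace ℝ E] (C : ProperCone ℝ (ι → ℝ)) (hC_nonneg : ∀ y ∈ C, 0 ≤ y)
    (f : (ι → ℝ) →L[ℝ] E) {φ : E → ℝ} (hφ : Continuous φ) (hφf : ∀ y ∈ C, φ (f y) = ∑ i, y i)
    {b : E} (hb : b ∉ f '' C) : ∃ g : StrongDual ℝ E, (∀ y ∈ C, 0 ≤ g (f y)) ∧ g b < 0 := by
  -- `C.map f` is the closure of `f '' C`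
  have hmap : (C.map f : Set E) = f '' C :=
    (C.isClosed.image_of_comp_eq_sum hC_nonneg f.continuous hφ hφf).closure_eq
  obtain ⟨g, hg, hgb⟩ := (C.map f).hyperplane_separation_point (x₀ := b)
    (by rwa [← SetLike.mem_coe, hmap])
  exact ⟨g, fun y hy => hg _ (by rw [← SetLike.mem_coe, hmap]; exact Set.mem_image_of_mem f hy),
    hgb⟩

theorem StrongDual.exists_apply_eq_dotProduct {ι R : Type*} [Fintype ι] [CommSemiring R]
    [TopologicalSpace R] (g : StrongDual R (ι → R)) : ∃ w : ι → R, ∀ x, g x = w ⬝ᵥ x := by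
  classical
  refine ⟨fun i => g (Pi.single i 1), fun x => ?_⟩
  conv_lhs => rw [pi_eq_sum_univ' x]
  simp [dotProduct, mul_comm]

namespace StochasticMatrix

variable {α : Type*}

def supportCone (L : α → α → Bool) : ProperCone ℝ (α × α → ℝ) where
  carrier := {P | 0 ≤ P ∧ ∀ p : α × α, L p.1 p.2 = false → P p = 0}
  add_mem' := fun ⟨hP, hPL⟩ ⟨hQ, hQL⟩ =>
    ⟨add_nonneg hP hQ, fun p hp => by simp [hPL p hp, hQL p hp]⟩
  zero_mem' := ⟨le_rfl, fun _ _ => rfl⟩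
  smul_mem' := fun c P ⟨hP, hPL⟩ => ⟨smul_nonneg c.2 hP, fun p hp => by simp [hPL p hp]⟩
  isClosed' := by
    refine isClosed_Ici.inter ?_
    show IsClosed {P : α × α → ℝ | ∀ p : α × α, L p.1 p.2 = false → P p = 0}
    simp only [Set.ofPred_forall]
    exact isClosed_iInter fun p => isClosed_iInter fun _ =>
      isClosed_eq (continuous_apply p) continuous_const

variable {L : α → α → Bool}

lemma single_mem_supportCone [DecidableEq α] {p : α × α} (hp : L p.1 p.2 = true) :
    Pi.single p 1 ∈ supportCone L := by
  refine ⟨Pi.single_nonneg.2 zero_le_one, fun q hq => Pi.single_eq_of_ne ?_ _⟩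
  rintro rfl
  simp [hp] at hq

variable [Fintype α]

lemma dotProduct_nonneg_of_mem_supportCone {P c : α × α → ℝ} (hP : P ∈ supportCone L)
    (hc : ∀ p : α × α, L p.1 p.2 = true → 0 ≤ c p) : 0 ≤ P ⬝ᵥ c := by
  refine sum_nonneg fun p _ => ?_
  cases hL : L p.1 p.2
  · simp [hP.2 p hL]
  · exact mul_nonneg (hP.1 p) (hc p hL)

noncomputable def marginalMap (π : α → ℝ) : (α × α → ℝ) →L[ℝ] (α ⊕ α → ℝ) :=
  LinearMap.toContinuousLinearMap
    { toFun := fun P => Sum.elim (fun t => ∑ s, P (t, s)) (fun s => ∑ t, π t * P (t, s))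
      map_add' := fun P Q => by
        ext (t | s) <;> simp [sum_add_distrib, mul_add]
      map_smul' := fun c P => by
        ext (t | s) <;> simp [mul_sum, mul_left_comm] }

@[simp] lemma marginalMap_inl (π : α → ℝ) (P : α × α → ℝ) (t : α) :
    marginalMap π P (Sum.inl t) = ∑ s, P (t, s) := rfl

@[simp] lemma marginalMap_inr (π : α → ℝ) (P : α × α → ℝ) (s : α) :
    marginalMap π P (Sum.inr s) = ∑ t, π t * P (t, s) := rfl

lemma sum_marginalMap_inl (π : α → ℝ) (P : α × α → ℝ) :
    ∑ t, marginalMap π P (Sum.inl t) = ∑ p, P p := by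
  simp [Fintype.sum_prod_type]

lemma dotProduct_marginalMap (π : α → ℝ) (P : α × α → ℝ) (w : α ⊕ α → ℝ) :
    w ⬝ᵥ marginalMap π P = P ⬝ᵥ fun p => w (Sum.inl p.1) + w (Sum.inr p.2) * π p.1 := by
  simp only [dotProduct, Fintype.sum_sum_type, marginalMap_inl, marginalMap_inr, mul_sum,
    Fintype.sum_prod_type, mul_add, sum_add_distrib]
  rw [sum_comm (f := fun s t => w (Sum.inr s) * (π t * P (t, s)))]
  congr 1 <;> refine sum_congr rfl fun _ _ => sum_congr rfl fun _ _ => by ring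

lemma sum_elim_dotProduct_sum_elim (u v π : α → ℝ) :
    Sum.elim u v ⬝ᵥ Sum.elim 1 π = ∑ r, (u r + π r * v r) := by
  simp [dotProduct, Fintype.sum_sum_type, sum_add_distrib, mul_comm]

lemma exists_stochastic_iff_mem_image (π : α → ℝ) :
    (∃ P : α → α → ℝ, (∀ t s, 0 ≤ P t s) ∧ (∀ t, ∑ s, P t s = 1) ∧
      (∀ s, ∑ t, π t * P t s = π s) ∧ (∀ t s, L t s = false → P t s = 0)) ↔
    Sum.elim (1 : α → ℝ) π ∈ marginalMap π '' supportCone L := by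
  constructor
  · rintro ⟨P, hP, hrow, hstat, hsupp⟩
    exact ⟨fun p => P p.1 p.2, ⟨fun p => hP _ _, fun p => hsupp _ _⟩,
      by ext (t | s) <;> simp [hrow, hstat]⟩
  · rintro ⟨P, ⟨hP, hsupp⟩, hPb⟩
    exact ⟨fun t s => P (t, s), fun t s => hP _, fun t => congr_fun hPb (Sum.inl t),
      fun s => congr_fun hPb (Sum.inr s), fun t s => hsupp (t, s)⟩

end StochasticMatrix

open StochasticMatrix

theorem stmt8_general {ℓ : ℕ}
    (πh : Fin ℓ → ℝ)
    (L : Fin ℓ → Fin ℓ → Bool) :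
    (∃ Ph : Fin ℓ → Fin ℓ → ℝ,
      (∀ t s, 0 ≤ Ph t s) ∧ (∀ t, ∑ s, Ph t s = 1) ∧
      (∀ s, ∑ t, πh t * Ph t s = πh s) ∧
      (∀ t s, L t s = false → Ph t s = 0)) ↔
    ¬ ∃ u v : Fin ℓ → ℝ,
      (∀ t s, L t s = true → 0 ≤ u t + v s * πh t) ∧
      (∑ r, (u r + πh r * v r) < 0) := by
  rw [exists_stochastic_iff_mem_image]
  constructor
  · rintro ⟨P, hP, hPb⟩ ⟨u, v, hdual, hneg⟩
    have hpair := dotProduct_marginalMap πh P (Sum.elim u v)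
    rw [hPb, sum_elim_dotProduct_sum_elim] at hpair
    exact hneg.not_ge (hpair ▸ dotProduct_nonneg_of_mem_supportCone hP fun p hp => hdual _ _ hp)
  · intro hno
    by_contra hb
    obtain ⟨g, hg, hgb⟩ := (supportCone L).exists_dual_of_notMem_image (fun P hP => hP.1)
      (marginalMap πh) (φ := fun x => ∑ t, x (Sum.inl t)) (by fun_prop)
      (fun P _ => sum_marginalMap_inl πh P) hb
    obtain ⟨w, hw⟩ := g.exists_apply_eq_dotProduct
    refine hno ⟨w ∘ Sum.inl, w ∘ Sum.inr, fun t s hts => ?_, ?_⟩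
    · classical
      simpa [hw, dotProduct_marginalMap, single_dotProduct] using
        hg _ (single_mem_supportCone (p := (t, s)) hts)
    · rwa [hw, ← Sum.elim_comp_inl_inr w, sum_elim_dotProduct_sum_elim] at hgb

/-- Farkas-type feasibility criterion: a stochastic matrix P̂ with stationary vector π̂
and support contained in L exists iff there are no vectors u, v with
u(t) + v(s)π̂(t) ≥ 0 whenever L(t,s) = 1 and Σ_r (u(r) + π̂(r)v(r)) < 0. -/
theorem stmt8 {ℓ : ℕ} (hℓ : 1 ≤ ℓ)
    (πh : Fin ℓ → ℝ) (hpos : ∀ i, 0 < πh i) (hsum : ∑ i, πh i = 1)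
    (L : Fin ℓ → Fin ℓ → Bool) :
    (∃ Ph : Fin ℓ → Fin ℓ → ℝ,
      (∀ t s, 0 ≤ Ph t s) ∧ (∀ t, ∑ s, Ph t s = 1) ∧
      (∀ s, ∑ t, πh t * Ph t s = πh s) ∧
      (∀ t s, L t s = false → Ph t s = 0)) ↔
    ¬ ∃ u v : Fin ℓ → ℝ,
      (∀ t s, L t s = true → 0 ≤ u t + v s * πh t) ∧
      (∑ r, (u r + πh r * v r) < 0) :=
  stmt8_general πh L
end

section
/- Let π be a stationary distribution of a stochastic matrix P on I ⊔ E satisfying (H1): P(e,i) = π(i) for e ∈ E, i ∈ I, with 0 < π(I) < 1. Define Q(i,j) = P(i,j) + P(i,E)·π̂(j) for i,j ∈ I, where P(i,E) = Σ_{d∈E} P(i,d) and π̂(j) = π(j)/π(I). Then Q is a stochastic matrix on I and π̂_I = π(I)^{-1} π_I is a stationary distribution of Q. -/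
open Finset

/-- The matrix Q(i,j) = P(i,j) + P(i,E)·π̂(j) on I is stochastic and has
π̂_I = π(I)⁻¹ π_I as a stationary distribution. -/
theorem stmt9 {I E : Type*} [Fintype I] [Fintype E] [Nonempty I] [Nonempty E]
    (P : (I ⊕ E) → (I ⊕ E) → ℝ) (π : (I ⊕ E) → ℝ)
    (hPnn : ∀ a b, 0 ≤ P a b) (hProw : ∀ a, ∑ b, P a b = 1)
    (hπpos : ∀ a, 0 < π a) (hπsum : ∑ a, π a = 1)
    (hstat : ∀ b, ∑ a, π a * P a b = π b)
    (hH1 : ∀ (d : E) (i : I), P (Sum.inr d) (Sum.inl i) = π (Sum.inl i))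
    (hπI : 0 < ∑ i : I, π (Sum.inl i)) (hπI1 : ∑ i : I, π (Sum.inl i) < 1) :
    (∀ i j : I, 0 ≤ P (Sum.inl i) (Sum.inl j)
        + (∑ d : E, P (Sum.inl i) (Sum.inr d)) * (π (Sum.inl j) / ∑ i' : I, π (Sum.inl i'))) ∧
    (∀ i : I, ∑ j : I, (P (Sum.inl i) (Sum.inl j)
        + (∑ d : E, P (Sum.inl i) (Sum.inr d)) * (π (Sum.inl j) / ∑ i' : I, π (Sum.inl i'))) = 1) ∧
    (∀ j : I, ∑ i : I, (π (Sum.inl i) / ∑ i' : I, π (Sum.inl i')) *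
        (P (Sum.inl i) (Sum.inl j)
          + (∑ d : E, P (Sum.inl i) (Sum.inr d)) * (π (Sum.inl j) / ∑ i' : I, π (Sum.inl i')))
      = π (Sum.inl j) / ∑ i' : I, π (Sum.inl i')) := by
  set S : ℝ := ∑ i' : I, π (Sum.inl i') with hSdef
  have hS0 : S ≠ 0 := ne_of_gt hπI
  -- split of stationarity
  have hsplit : ∀ j : I, (∑ i : I, π (Sum.inl i) * P (Sum.inl i) (Sum.inl j))
      + (∑ e : E, π (Sum.inr e)) * π (Sum.inl j) = π (Sum.inl j) := by
    intro j
    have := hstat (Sum.inl j)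
    rw [Fintype.sum_sum_type] at this
    calc (∑ i : I, π (Sum.inl i) * P (Sum.inl i) (Sum.inl j))
        + (∑ e : E, π (Sum.inr e)) * π (Sum.inl j)
        = (∑ i : I, π (Sum.inl i) * P (Sum.inl i) (Sum.inl j))
        + ∑ e : E, π (Sum.inr e) * P (Sum.inr e) (Sum.inl j) := by
          rw [Finset.sum_mul]
          congr 1
          exact Finset.sum_congr rfl fun e _ => by rw [hH1 e j]
      _ = π (Sum.inl j) := this
  have hπE : (∑ e : E, π (Sum.inr e)) = 1 - S := by
    have := hπsum
    rw [Fintype.sum_sum_type] at this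
    linarith
  have h1 : ∀ j : I, (∑ i : I, π (Sum.inl i) * P (Sum.inl i) (Sum.inl j))
      = π (Sum.inl j) * S := by
    intro j
    have := hsplit j
    rw [hπE] at this
    linarith [this]
  -- row sums of P restricted
  have hrow : ∀ i : I, (∑ j : I, P (Sum.inl i) (Sum.inl j))
      + (∑ d : E, P (Sum.inl i) (Sum.inr d)) = 1 := by
    intro i
    have := hProw (Sum.inl i)
    rw [Fintype.sum_sum_type] at this
    exact this
  have h2 : (∑ i : I, π (Sum.inl i) * (∑ d : E, P (Sum.inl i) (Sum.inr d)))
      = S * (1 - S) := by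
    have : (∑ i : I, π (Sum.inl i) * (∑ d : E, P (Sum.inl i) (Sum.inr d)))
        = ∑ i : I, (π (Sum.inl i) - π (Sum.inl i) * (∑ j : I, P (Sum.inl i) (Sum.inl j))) := by
      apply Finset.sum_congr rfl
      intro i _
      linear_combination π (Sum.inl i) * hrow i
    rw [this, Finset.sum_sub_distrib]
    have hswap : (∑ i : I, π (Sum.inl i) * (∑ j : I, P (Sum.inl i) (Sum.inl j)))
        = ∑ j : I, ∑ i : I, π (Sum.inl i) * P (Sum.inl i) (Sum.inl j) := by
      rw [Finset.sum_comm]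
      exact Finset.sum_congr rfl fun i _ => Finset.mul_sum _ _ _
    rw [hswap]
    have : (∑ j : I, ∑ i : I, π (Sum.inl i) * P (Sum.inl i) (Sum.inl j))
        = ∑ j : I, π (Sum.inl j) * S := Finset.sum_congr rfl fun j _ => h1 j
    rw [this, ← Finset.sum_mul]
    ring
  refine ⟨?_, ?_, ?_⟩
  · intro i j
    have : 0 ≤ (∑ d : E, P (Sum.inl i) (Sum.inr d)) :=
      Finset.sum_nonneg fun d _ => hPnn _ _
    have hπj : 0 ≤ π (Sum.inl j) := (hπpos _).le
    exact add_nonneg (hPnn _ _) (mul_nonneg this (div_nonneg hπj hπI.le))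
  · intro i
    rw [Finset.sum_add_distrib, ← Finset.mul_sum]
    have : (∑ j : I, π (Sum.inl j) / S) = 1 := by
      rw [← Finset.sum_div, ← hSdef, div_self hS0]
    rw [this, mul_one]
    exact hrow i
  · intro j
    have key : (∑ i : I, π (Sum.inl i) * (P (Sum.inl i) (Sum.inl j)
        + (∑ d : E, P (Sum.inl i) (Sum.inr d)) * (π (Sum.inl j) / S))) = π (Sum.inl j) := by
      have expand : (∑ i : I, π (Sum.inl i) * (P (Sum.inl i) (Sum.inl j)
          + (∑ d : E, P (Sum.inl i) (Sum.inr d)) * (π (Sum.inl j) / S)))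
          = (∑ i : I, π (Sum.inl i) * P (Sum.inl i) (Sum.inl j))
          + (∑ i : I, π (Sum.inl i) * (∑ d : E, P (Sum.inl i) (Sum.inr d)))
            * (π (Sum.inl j) / S) := by
        rw [Finset.sum_mul, ← Finset.sum_add_distrib]
        exact Finset.sum_congr rfl fun i _ => by ring
      rw [expand, h1, h2]
      field_simp
      ring
    calc (∑ i : I, (π (Sum.inl i) / S) * (P (Sum.inl i) (Sum.inl j)
          + (∑ d : E, P (Sum.inl i) (Sum.inr d)) * (π (Sum.inl j) / S)))
        = (∑ i : I, π (Sum.inl i) * (P (Sum.inl i) (Sum.inl j)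
          + (∑ d : E, P (Sum.inl i) (Sum.inr d)) * (π (Sum.inl j) / S))) / S := by
          rw [Finset.sum_div]
          exact Finset.sum_congr rfl fun i _ => by ring
      _ = π (Sum.inl j) / S := by rw [key]
end

section
/- Exit law from I: under the assumptions that π̂_Iᵗ P_{I×I} = π(I) π̂_Iᵗ and Σ_{i∈I} π̂_I(i) P(i,d) = π(d) for all d ∈ E (where π(E) = 1 − π(I) > 0 and π̂_E(d) = π(d)/π(E)), the Markov chain X with kernel P started from π̂_I satisfies, for all d ∈ E and n ≥ 1: P_{π̂_I}(X_{τ_E} = d, τ_E = n) = π̂_E(d) · π(I)^{n−1}(1 − π(I)). In particular P_{π̂_I}(X_{τ_E} = d) = π̂_E(d), and the exit position X_{τ_E} is independent of the exit time τ_E. -/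
/-!
The path sum over `y : Fin (n + 1) → I` is the row vector `π̂_I P_{I×I}^n` paired with the exit
column `P_{I×{d}}`. As `π̂_I` is a left eigenvector of `P_{I×I}` for `π(I)`, this equals
`π(I)^n π(d)`, and summing the geometric series in `n` gives the exit law.
-/

open Matrix

section PathSums

variable {ι R : Type*} [Fintype ι] [DecidableEq ι] [CommSemiring R]

theorem sum_path_prod_eq_vecMul_pow_dotProduct (Q : Matrix ι ι R) (n : ℕ) (v g : ι → R) :
    ∑ y : Fin (n + 1) → ι, v (y 0) * (∏ k : Fin n, Q (y k.castSucc) (y k.succ)) * g (y (Fin.last n))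
      = (v ᵥ* Q ^ n) ⬝ᵥ g := by
  induction n generalizing v with
  | zero =>
    rw [← (Equiv.funUnique (Fin 1) ι).symm.sum_comp]
    simp [dotProduct]
  | succ n ih =>
    rw [← (Fin.consEquiv fun _ => ι).sum_comp, Fintype.sum_prod_type, Finset.sum_comm, pow_succ',
      ← vecMul_vecMul, ← ih]
    refine Finset.sum_congr rfl fun z _ => ?_
    simp only [Fin.consEquiv_apply, Fin.prod_univ_succ, vecMul, dotProduct, Finset.sum_mul]
    refine Finset.sum_congr rfl fun i _ => ?_
    simp only [Fin.cons_zero, Fin.castSucc_zero, Fin.succ_zero_eq_one, Fin.cons_one, Fin.castSucc_succ,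
      Fin.cons_succ, ← Fin.succ_last]
    ring

theorem vecMul_pow_of_vecMul_eq_smul {Q : Matrix ι ι R} {v : ι → R} {c : R}
    (hv : v ᵥ* Q = c • v) (n : ℕ) : v ᵥ* Q ^ n = c ^ n • v := by
  induction n with
  | zero => simp
  | succ n ih => rw [pow_succ, ← vecMul_vecMul, ih, smul_vecMul, hv, smul_smul, pow_succ]

end PathSums

theorem stmt11_general {I E : Type*} [Fintype I]
    (P : (I ⊕ E) → (I ⊕ E) → ℝ)
    (πhI : I → ℝ)
    (πI : ℝ) (hπI0 : 0 < πI) (hπI1 : πI < 1)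
    (heig : ∀ j : I, ∑ i : I, πhI i * P (Sum.inl i) (Sum.inl j) = πI * πhI j)
    (πE : E → ℝ)
    (hexit : ∀ d : E, ∑ i : I, πhI i * P (Sum.inl i) (Sum.inr d) = πE d) :
    (∀ (n : ℕ) (d : E),
      ∑ y : Fin (n + 1) → I,
        πhI (y 0) * (∏ k : Fin n, P (Sum.inl (y k.castSucc)) (Sum.inl (y k.succ)))
          * P (Sum.inl (y (Fin.last n))) (Sum.inr d)
      = (πE d / (1 - πI)) * πI ^ n * (1 - πI)) ∧
    (∀ d : E,
      (∑' n : ℕ,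
        ∑ y : Fin (n + 1) → I,
          πhI (y 0) * (∏ k : Fin n, P (Sum.inl (y k.castSucc)) (Sum.inl (y k.succ)))
            * P (Sum.inl (y (Fin.last n))) (Sum.inr d))
      = πE d / (1 - πI)) := by
  classical
  let Q : Matrix I I ℝ := .of fun i j => P (Sum.inl i) (Sum.inl j)
  have hQ : πhI ᵥ* Q = πI • πhI := funext heig
  have hlaw : ∀ (n : ℕ) (d : E),
      ∑ y : Fin (n + 1) → I,
        πhI (y 0) * (∏ k : Fin n, P (Sum.inl (y k.castSucc)) (Sum.inl (y k.succ)))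
          * P (Sum.inl (y (Fin.last n))) (Sum.inr d) = πI ^ n * πE d := fun n d =>
    calc _ = (πhI ᵥ* Q ^ n) ⬝ᵥ fun j => P (Sum.inl j) (Sum.inr d) :=
          sum_path_prod_eq_vecMul_pow_dotProduct Q n πhI _
      _ = πI ^ n * πE d := by
          rw [vecMul_pow_of_vecMul_eq_smul hQ, smul_dotProduct, smul_eq_mul, ← hexit d]
          rfl
  refine ⟨fun n d => ?_, fun d => ?_⟩
  · have hπI : (1 : ℝ) - πI ≠ 0 := by linarith
    rw [hlaw]
    field_simp
  · simp_rw [hlaw]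
    rw [tsum_mul_right, tsum_geometric_of_lt_one hπI0.le hπI1, div_eq_inv_mul]

/-- Exit law from I: started from π̂_I, for every d ∈ E and n ≥ 0 (exit time n+1),
P(X_{τ_E} = d, τ_E = n+1) = π̂_E(d)·π(I)ⁿ·(1-π(I)); summing over the exit time,
P(X_{τ_E} = d) = π̂_E(d). In particular X_{τ_E} and τ_E are independent. -/
theorem stmt11 {I E : Type*} [Fintype I] [Fintype E] [Nonempty I] [Nonempty E]
    (P : (I ⊕ E) → (I ⊕ E) → ℝ)
    (hPnn : ∀ a b, 0 ≤ P a b) (hProw : ∀ a, ∑ b, P a b = 1)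
    (πhI : I → ℝ) (hnn : ∀ i, 0 ≤ πhI i) (hsum : ∑ i, πhI i = 1)
    (πI : ℝ) (hπI0 : 0 < πI) (hπI1 : πI < 1)
    (heig : ∀ j : I, ∑ i : I, πhI i * P (Sum.inl i) (Sum.inl j) = πI * πhI j)
    (πE : E → ℝ)
    (hexit : ∀ d : E, ∑ i : I, πhI i * P (Sum.inl i) (Sum.inr d) = πE d)
    (hπEsum : ∑ d, πE d = 1 - πI) :
    (∀ (n : ℕ) (d : E),
      ∑ y : Fin (n + 1) → I,
        πhI (y 0) * (∏ k : Fin n, P (Sum.inl (y k.castSucc)) (Sum.inl (y k.succ)))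
          * P (Sum.inl (y (Fin.last n))) (Sum.inr d)
      = (πE d / (1 - πI)) * πI ^ n * (1 - πI)) ∧
    (∀ d : E,
      (∑' n : ℕ,
        ∑ y : Fin (n + 1) → I,
          πhI (y 0) * (∏ k : Fin n, P (Sum.inl (y k.castSucc)) (Sum.inl (y k.succ)))
            * P (Sum.inl (y (Fin.last n))) (Sum.inr d))
      = πE d / (1 - πI)) :=
  stmt11_general P πhI πI hπI0 hπI1 heig πE hexit
end

section
/- Reduction of Farkas alternatives: for π̂ a strictly positive probability vector on {1,…,ℓ} and L a 0-1 matrix, the existence of (u,v,w) ∈ (ℝ^ℓ)³ satisfying u(t) + v(s)π̂(t) + w(s)(1 − L(t,s)) ≥ 0 for all t,s and Σ_r (u(r) + π̂(r)v(r)) < 0 is equivalent to the existence of (u,v) ∈ (ℝ^ℓ)² satisfying u(t) + v(s)π̂(t) ≥ 0 for all t,s with L(t,s) = 1 and Σ_r (u(r) + π̂(r)v(r)) < 0. -/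
open Finset

/-- Reduction of the Farkas alternative: existence of (u,v,w) with
u(t) + v(s)π̂(t) + w(s)(1 - L(t,s)) ≥ 0 for all t,s and Σ_r(u(r) + π̂(r)v(r)) < 0
is equivalent to existence of (u,v) with u(t) + v(s)π̂(t) ≥ 0 whenever L(t,s) = 1
and Σ_r(u(r) + π̂(r)v(r)) < 0. -/
theorem stmt17 {ℓ : ℕ} (hℓ : 1 ≤ ℓ)
    (πh : Fin ℓ → ℝ) (hpos : ∀ i, 0 < πh i)
    (L : Fin ℓ → Fin ℓ → ℝ) (hL : ∀ t s, L t s = 0 ∨ L t s = 1) :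
    (∃ u v w : Fin ℓ → ℝ,
      (∀ t s, 0 ≤ u t + v s * πh t + w s * (1 - L t s)) ∧
      (∑ r, (u r + πh r * v r) < 0)) ↔
    (∃ u v : Fin ℓ → ℝ,
      (∀ t s, L t s = 1 → 0 ≤ u t + v s * πh t) ∧
      (∑ r, (u r + πh r * v r) < 0)) := by
  haveI : NeZero ℓ := ⟨by omega⟩
  constructor
  · rintro ⟨u, v, w, h1, h2⟩
    refine ⟨u, v, fun t s hts => ?_, h2⟩
    have := h1 t s
    rw [hts] at this
    simpa using this
  · rintro ⟨u, v, h1, h2⟩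
    have hne : (Finset.univ : Finset (Fin ℓ)).Nonempty := univ_nonempty
    refine ⟨u, v, fun s => (Finset.univ.sup' hne fun t => -(u t + v s * πh t)) ⊔ 0,
      fun t s => ?_, h2⟩
    rcases hL t s with h | h
    · rw [h]
      have hw : -(u t + v s * πh t) ≤
          (Finset.univ.sup' hne fun t => -(u t + v s * πh t)) ⊔ 0 :=
        le_trans (Finset.le_sup' (fun t => -(u t + v s * πh t)) (mem_univ t)) le_sup_left
      nlinarith [hw]
    · rw [h]
      have := h1 t s h
      nlinarith [this]
end
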